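/- arXiv:2304.07149 — 4 statements merged into one kernel-verified Lean document; each statement's English description precedes it below -/
import Mathlib

section
/- Fix λ ∈ ℂ with |λ| = 1, define f_λ(z) = 1 + (conj(λ)·z − 1)·exp(1/(conj(λ)·z − 1)) for z ≠ λ (with f_λ(λ) = 1) and φ_λ(z) = (conj(λ)·z + 1)/2. Then for every integer k ≥ 1 and every 0 < δ < 1, the derivative of the product z ↦ f_λ(z)·φ_λ(z)^k is unbounded on the set {z ∈ 𝔻 : |z − λ| < δ}: for every C > 0 there exists z ∈ 𝔻 with |z − λ| < δ and |(f_λ·φ_λ^k)′(z)| > C. -/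
open Complex

set_option maxHeartbeats 2000000 in
/-- For `|λ| = 1`, `f_λ` as above and `φ_λ(z) = (conj λ · z + 1)/2`, for
every `k ≥ 1` and `0 < δ < 1` the derivative of `z ↦ f_λ(z)·φ_λ(z)^k` is unbounded on
`{z ∈ 𝔻 : |z − λ| < δ}`. -/
theorem stmt_12 (lam : ℂ) (hlam : ‖lam‖ = 1) (flam phlam : ℂ → ℂ)
    (hflam : ∀ z : ℂ, flam z = if z = lam then 1 else
      1 + ((starRingEnd ℂ) lam * z - 1) * Complex.exp (1 / ((starRingEnd ℂ) lam * z - 1)))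
    (hphlam : ∀ z : ℂ, phlam z = ((starRingEnd ℂ) lam * z + 1) / 2)
    (k : ℕ) (hk : 1 ≤ k) (δ : ℝ) (hδ0 : 0 < δ) (hδ1 : δ < 1) :
    ∀ C > (0 : ℝ), ∃ z ∈ Metric.ball (0 : ℂ) 1, ‖z - lam‖ < δ ∧
      C < ‖deriv (fun w => flam w * phlam w ^ k) z‖ := by
  intro C hC
  obtain ⟨a, ha_def⟩ : ∃ a : ℂ, a = (starRingEnd ℂ) lam := ⟨_, rfl⟩
  have ha : ‖a‖ = 1 := by rw [ha_def]; simpa using hlam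
  have haL : a * lam = 1 := by
    rw [ha_def]
    have h := Complex.mul_conj lam
    rw [Complex.normSq_eq_norm_sq, hlam] at h
    push_cast at h
    rw [mul_comm] at h
    simpa using h
  have hkpos : (0:ℝ) < k := by exact_mod_cast hk
  obtain ⟨B, hB_def⟩ : ∃ B : ℝ, B = (k:ℝ) * (3/2)^k * 2 := ⟨_, rfl⟩
  have hB : 0 < B := by rw [hB_def]; positivity
  -- choose ε
  obtain ⟨ε, hε0, hεδ, hεhalf, hMε⟩ :
      ∃ ε : ℝ, 0 < ε ∧ ε < δ ∧ ε ≤ 1/2 ∧ Real.exp 1 * 2^k * (C + B) + 2 ≤ 1/ε := by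
    have hMpos : (0:ℝ) < Real.exp 1 * 2^k * (C + B) + 2 := by positivity
    refine ⟨min (δ/2) (min (1/2) (1/(Real.exp 1 * 2^k * (C + B) + 2))), ?_, ?_, ?_, ?_⟩
    · exact lt_min (by linarith) (lt_min (by norm_num) (by positivity))
    · exact lt_of_le_of_lt (min_le_left _ _) (by linarith)
    · exact le_trans (min_le_right _ _) (min_le_left _ _)
    · have h1 : min (δ/2) (min (1/2) (1/(Real.exp 1 * 2^k * (C + B) + 2)))
          ≤ 1/(Real.exp 1 * 2^k * (C + B) + 2) :=
        le_trans (min_le_right _ _) (min_le_right _ _)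
      have h2 : 0 < min (δ/2) (min (1/2) (1/(Real.exp 1 * 2^k * (C + B) + 2))) :=
        lt_min (by linarith) (lt_min (by norm_num) (by positivity))
      have h3 := one_div_le_one_div_of_le h2 h1
      rwa [one_div_one_div] at h3
  -- square root
  obtain ⟨s, hs2⟩ : ∃ s : ℝ, s^2 = 1 - ε^2 :=
    ⟨Real.sqrt (1 - ε^2), Real.sq_sqrt (by nlinarith)⟩
  -- the point z
  obtain ⟨d, hd_def⟩ : ∃ d : ℂ, d = (-(ε^2) : ℝ) + (ε*s : ℝ) * Complex.I := ⟨_, rfl⟩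
  have hdre : d.re = -(ε^2) := by rw [hd_def]; simp [← Complex.ofReal_pow]
  have hdim : d.im = ε * s := by rw [hd_def]; simp [← Complex.ofReal_pow]
  have hnormd : Complex.normSq d = ε^2 := by
    rw [Complex.normSq_apply, hdre, hdim]
    linear_combination (ε^2) * hs2
  have hd_abs : ‖d‖ = ε := by
    rw [Complex.norm_def, hnormd, Real.sqrt_sq hε0.le]
  have hd0 : d ≠ 0 := by
    intro h
    rw [h, norm_zero] at hd_abs
    exact absurd hd_abs.symm (ne_of_gt hε0)
  obtain ⟨z, hz_def⟩ : ∃ z : ℂ, z = lam * (1 + d) := ⟨_, rfl⟩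
  have haz : a * z - 1 = d := by
    have h : a * z = (a * lam) * (1 + d) := by rw [hz_def]; ring
    rw [h, haL]; ring
  have hzlam_abs : ‖z - lam‖ = ε := by
    have h : z - lam = lam * d := by rw [hz_def]; ring
    rw [h, norm_mul, hlam, one_mul, hd_abs]
  have habsz : ‖z‖ < 1 := by
    rw [hz_def, norm_mul, hlam, one_mul, Complex.norm_def]
    have h1 : Complex.normSq (1 + d) = 1 - ε^2 := by
      rw [Complex.normSq_apply, Complex.add_re, Complex.add_im, Complex.one_re,
        Complex.one_im, hdre, hdim]
      linear_combination (ε^2) * hs2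
    rw [h1]
    calc Real.sqrt (1 - ε^2) < Real.sqrt 1 := Real.sqrt_lt_sqrt (by nlinarith) (by nlinarith)
      _ = 1 := Real.sqrt_one
  have hzne : z ≠ lam := fun h => by rw [h, hlam] at habsz; linarith
  -- d inverse facts
  have hdinv_re : (d⁻¹).re = -1 := by
    rw [Complex.inv_re, hdre, hnormd]
    field_simp
  have hdinv_abs : ‖d⁻¹‖ = ε⁻¹ := by rw [norm_inv, hd_abs]
  have hexp_abs : ‖Complex.exp d⁻¹‖ = Real.exp (-1) := by
    rw [Complex.norm_exp, hdinv_re]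
  -- derivative computation
  have hu : HasDerivAt (fun w : ℂ => a * w - 1) a z := by
    simpa using ((hasDerivAt_id z).const_mul a).sub_const 1
  have hinv : HasDerivAt (fun w : ℂ => (a * w - 1)⁻¹) (-a / d^2) z := by
    have h := hu.inv (by rw [haz]; exact hd0)
    rwa [haz] at h
  have hexp : HasDerivAt (fun w : ℂ => Complex.exp ((a * w - 1)⁻¹))
      (Complex.exp d⁻¹ * (-a / d^2)) z := by
    have h := hinv.cexp
    rwa [haz] at h
  have hfg : HasDerivAt (fun w : ℂ => 1 + (a * w - 1) * Complex.exp ((a * w - 1)⁻¹))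
      (a * Complex.exp d⁻¹ + d * (Complex.exp d⁻¹ * (-a / d^2))) z := by
    have h := (hu.mul hexp).const_add 1
    rwa [haz] at h
  have hphi : HasDerivAt (fun w : ℂ => (a * w + 1)/2) (a/2) z := by
    simpa using (((hasDerivAt_id z).const_mul a).add_const 1).div_const 2
  have hphik : HasDerivAt (fun w : ℂ => ((a * w + 1)/2)^k)
      ((k:ℂ) * ((a*z+1)/2)^(k-1) * (a/2)) z := hphi.pow k
  have hF : HasDerivAt
      (fun w : ℂ => (1 + (a * w - 1) * Complex.exp ((a * w - 1)⁻¹)) * ((a * w + 1)/2)^k)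
      ((a * Complex.exp d⁻¹ + d * (Complex.exp d⁻¹ * (-a / d^2))) * ((a*z+1)/2)^k
        + (1 + d * Complex.exp d⁻¹) * ((k:ℂ) * ((a*z+1)/2)^(k-1) * (a/2))) z := by
    have h := hfg.mul hphik
    rwa [haz] at h
  have heq : (fun w => flam w * phlam w ^ k) =ᶠ[nhds z]
      (fun w : ℂ => (1 + (a * w - 1) * Complex.exp ((a * w - 1)⁻¹)) * ((a * w + 1)/2)^k) := by
    filter_upwards [eventually_ne_nhds hzne] with w hw
    rw [hflam w, hphlam w, if_neg hw, one_div, ← ha_def]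
  have hderiv : deriv (fun w => flam w * phlam w ^ k) z
      = (a * Complex.exp d⁻¹ + d * (Complex.exp d⁻¹ * (-a / d^2))) * ((a*z+1)/2)^k
        + (1 + d * Complex.exp d⁻¹) * ((k:ℂ) * ((a*z+1)/2)^(k-1) * (a/2)) := by
    rw [Filter.EventuallyEq.deriv_eq heq]
    exact hF.deriv
  -- simplify the first coefficient
  have hc : (a * Complex.exp d⁻¹ + d * (Complex.exp d⁻¹ * (-a / d^2))) * ((a*z+1)/2)^k
      + (1 + d * Complex.exp d⁻¹) * ((k:ℂ) * ((a*z+1)/2)^(k-1) * (a/2))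
      = a * Complex.exp d⁻¹ * (1 - d⁻¹) * ((a*z+1)/2)^k
      + (1 + d * Complex.exp d⁻¹) * ((k:ℂ) * ((a*z+1)/2)^(k-1) * (a/2)) := by
    have h : d * (Complex.exp d⁻¹ * (-a / d^2)) = -(a * Complex.exp d⁻¹ * d⁻¹) := by
      field_simp
    rw [h]; ring
  -- bounds on phi at z
  have hphiz : (a*z+1)/2 = 1 + d/2 := by linear_combination haz/2
  have habs_d2 : ‖d/2‖ = ε/2 := by
    rw [norm_div, hd_abs, Complex.norm_two]
  have hlo : 1/2 ≤ ‖(a*z+1)/2‖ := by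
    rw [hphiz]
    have h1 := norm_sub_norm_le (1:ℂ) (-(d/2))
    rw [norm_neg, sub_neg_eq_add] at h1
    simp only [norm_one] at h1
    rw [habs_d2] at h1
    linarith
  have hhi : ‖(a*z+1)/2‖ ≤ 3/2 := by
    rw [hphiz]
    calc ‖1 + d/2‖ ≤ ‖1‖ + ‖d/2‖ := norm_add_le _ _
      _ ≤ 3/2 := by rw [norm_one, habs_d2]; linarith
  have hsub : 1/ε - 1 ≤ ‖1 - d⁻¹‖ := by
    have h1 := norm_sub_norm_le (d⁻¹) (1:ℂ)
    rw [norm_sub_rev] at h1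
    simp only [norm_one] at h1
    rw [hdinv_abs] at h1
    have h2 : ε⁻¹ = 1/ε := (one_div ε).symm
    linarith
  have hMbig : (2:ℝ) ≤ 1/ε := by
    have h4 : (0:ℝ) ≤ Real.exp 1 * 2^k * (C + B) := by positivity
    linarith
  -- lower bound for the main term
  have hT1 : Real.exp (-1) * ((1/ε - 1) * (1/2:ℝ)^k)
      ≤ ‖a * Complex.exp d⁻¹ * (1 - d⁻¹) * ((a*z+1)/2)^k‖ := by
    rw [norm_mul, norm_mul, norm_mul, norm_pow, ha, hexp_abs, one_mul]
    have h2 : ((1/2:ℝ))^k ≤ ‖(a*z+1)/2‖^k := pow_le_pow_left₀ (by norm_num) hlo k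
    calc Real.exp (-1) * ((1/ε - 1) * (1/2:ℝ)^k)
        ≤ Real.exp (-1) * (‖1 - d⁻¹‖ * ‖(a*z+1)/2‖^k) := by
          apply mul_le_mul_of_nonneg_left _ (Real.exp_pos _).le
          exact mul_le_mul hsub h2 (by positivity) (norm_nonneg _)
      _ = Real.exp (-1) * ‖1 - d⁻¹‖ * ‖(a*z+1)/2‖^k := by ring
  -- upper bound for the second term
  have hexp1le : Real.exp (-1) ≤ 1 := by
    have h := Real.exp_le_exp.mpr (by norm_num : (-1:ℝ) ≤ 0)
    rwa [Real.exp_zero] at h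
  have hT2 : ‖(1 + d * Complex.exp d⁻¹) * ((k:ℂ) * ((a*z+1)/2)^(k-1) * (a/2))‖ ≤ B := by
    have habs_a2 : ‖a/2‖ = 1/2 := by rw [norm_div, ha, Complex.norm_two]
    rw [norm_mul, norm_mul, norm_mul, norm_pow, habs_a2, Complex.norm_natCast]
    have hA : ‖1 + d * Complex.exp d⁻¹‖ ≤ 2 := by
      have h1 : ‖1 + d * Complex.exp d⁻¹‖
          ≤ 1 + ‖d‖ * ‖Complex.exp d⁻¹‖ := by
        have h := norm_add_le 1 (d * Complex.exp d⁻¹)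
        simpa [norm_mul] using h
      rw [hd_abs, hexp_abs] at h1
      have h2 : ε * Real.exp (-1) ≤ 1 :=
        mul_le_one₀ (by linarith) (Real.exp_pos _).le hexp1le
      linarith only [h1, h2]
    have hp1 : ‖(a*z+1)/2‖^(k-1) ≤ (3/2:ℝ)^k := by
      calc ‖(a*z+1)/2‖^(k-1) ≤ (3/2:ℝ)^(k-1) :=
            pow_le_pow_left₀ (norm_nonneg _) hhi (k-1)
        _ ≤ (3/2:ℝ)^k := pow_le_pow_right₀ (by norm_num) (Nat.sub_le k 1)
    have hXY : ‖1 + d * Complex.exp d⁻¹‖ * ‖(a*z+1)/2‖^(k-1)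
        ≤ 2 * (3/2:ℝ)^k :=
      mul_le_mul hA hp1 (pow_nonneg (norm_nonneg _) _) (by norm_num)
    have h6 := mul_le_mul_of_nonneg_left hXY (by positivity : (0:ℝ) ≤ (k:ℝ)/2)
    calc ‖1 + d * Complex.exp d⁻¹‖ * ((k:ℝ) * ‖(a*z+1)/2‖^(k-1) * (1/2))
        = (k:ℝ)/2 * (‖1 + d * Complex.exp d⁻¹‖ * ‖(a*z+1)/2‖^(k-1)) := by
          ring
      _ ≤ (k:ℝ)/2 * (2 * (3/2:ℝ)^k) := h6
      _ ≤ B := by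
          rw [hB_def]
          nlinarith [mul_nonneg hkpos.le (pow_nonneg (by norm_num : (0:ℝ) ≤ 3/2) k)]
  -- key numeric inequality
  have key : C + B < Real.exp (-1) * ((1/ε - 1) * (1/2:ℝ)^k) := by
    have hp : (0:ℝ) < Real.exp (-1) * (1/2:ℝ)^k := by positivity
    have h3 := mul_le_mul_of_nonneg_left hMε hp.le
    have h1 : Real.exp (-1) * Real.exp 1 = 1 := by rw [← Real.exp_add]; norm_num
    have h2 : ((1/2:ℝ))^k * 2^k = 1 := by rw [← mul_pow]; norm_num
    have h12 : (Real.exp (-1) * Real.exp 1) * (((1/2:ℝ))^k * 2^k) * (C + B) = C + B := by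
      rw [h1, h2]; ring
    linarith only [h3, h12, hp]
  -- assemble
  refine ⟨z, ?_, ?_, ?_⟩
  · simpa [Metric.mem_ball, Complex.dist_eq] using habsz
  · rw [hzlam_abs]; exact hεδ
  · rw [hderiv, hc]
    have htri : ‖a * Complex.exp d⁻¹ * (1 - d⁻¹) * ((a*z+1)/2)^k‖
        ≤ ‖a * Complex.exp d⁻¹ * (1 - d⁻¹) * ((a*z+1)/2)^k
            + (1 + d * Complex.exp d⁻¹) * ((k:ℂ) * ((a*z+1)/2)^(k-1) * (a/2))‖
          + ‖(1 + d * Complex.exp d⁻¹) * ((k:ℂ) * ((a*z+1)/2)^(k-1) * (a/2))‖ := by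
      have h := norm_add_le
        (a * Complex.exp d⁻¹ * (1 - d⁻¹) * ((a*z+1)/2)^k
          + (1 + d * Complex.exp d⁻¹) * ((k:ℂ) * ((a*z+1)/2)^(k-1) * (a/2)))
        (-((1 + d * Complex.exp d⁻¹) * ((k:ℂ) * ((a*z+1)/2)^(k-1) * (a/2))))
      rw [add_neg_cancel_right, norm_neg] at h
      exact h
    linarith only [hT1, hT2, key, htri]
end

section
/- Let X and Y be complex Banach spaces, m ≥ 1 an integer, (α_j)_{j∈ℕ} a sequence of strictly positive real numbers converging to 0, and (x_j), (y_j) sequences in B_X with x_j ≠ y_j for all j. Then there exists a compact set K ⊆ X such that for every continuous symmetric m-linear map M : X^m → Y, writing P(x) = M(x, …, x) for the associated m-homogeneous polynomial, one has sup_j α_j · ‖P(x_j) − P(y_j)‖ / ‖x_j − y_j‖ ≤ ((2^m − 1)/m!) · sup_{u ∈ K} ‖P(u)‖. -/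
/-- Key estimate: difference of values of an `m`-homogeneous polynomial at two points,
bounded via values at roots-of-unity perturbations along the segment direction. -/
lemma aux_bound {X Y : Type*} [NormedAddCommGroup X] [NormedSpace ℂ X]
    [NormedAddCommGroup Y] [NormedSpace ℂ Y]
    (m : ℕ) (hm : 1 ≤ m)
    (M : ContinuousMultilinearMap ℂ (fun _ : Fin m => X) Y)
    (a b : X) (hab : a ≠ b) (hab2 : ‖a - b‖ ≤ 2)
    (C : ℝ) (hC0 : 0 ≤ C)
    (hC : ∀ t : ℕ, t ≤ m →
      ‖M (fun _ => b + (Complex.exp (2 * Real.pi * Complex.I / (m + 1))) ^ t •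
        (((‖a - b‖ : ℝ) : ℂ)⁻¹ • (a - b)))‖ ≤ C) :
    ‖M (fun _ => a) - M (fun _ => b)‖ ≤ ‖a - b‖ * (2 ^ m - 1) * C := by
  classical
  set ω : ℂ := Complex.exp (2 * Real.pi * Complex.I / (m + 1)) with hωdef
  have hm1 : (m + 1 : ℕ) ≠ 0 := Nat.succ_ne_zero m
  have hωprim : IsPrimitiveRoot ω (m + 1) := by
    have := Complex.isPrimitiveRoot_exp (m + 1) hm1
    have hcast : ((m + 1 : ℕ) : ℂ) = (m : ℂ) + 1 := by push_cast; ring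
    rwa [hcast] at this
  have hω1 : ω ^ (m + 1) = 1 := hωprim.pow_eq_one
  have hωnorm : ‖ω‖ = 1 := Complex.norm_eq_one_of_pow_eq_one hω1 hm1
  set n : ℝ := ‖a - b‖ with hndef
  have hn : 0 < n := norm_pos_iff.2 (sub_ne_zero.2 hab)
  set h : X := ((n : ℝ) : ℂ)⁻¹ • (a - b) with hhdef
  set e : ℕ → Y := fun k => ∑ s ∈ Finset.univ.filter (fun s : Finset (Fin m) => s.card = k),
      M (s.piecewise (fun _ => h) (fun _ => b)) with hedef
  -- expansion of the polynomial along the line b + λ h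
  have hQ : ∀ lam : ℂ, M (fun _ => b + lam • h)
      = ∑ k ∈ Finset.range (m + 1), lam ^ k • e k := by
    intro lam
    have h1 : (fun _ : Fin m => b + lam • h)
        = (fun _ : Fin m => lam • h) + (fun _ => b) := by
      funext i; simp [add_comm]
    have h3 : ∀ s : Finset (Fin m),
        M.toMultilinearMap (s.piecewise (fun _ => lam • h) (fun _ => b))
          = lam ^ s.card • M (s.piecewise (fun _ => h) (fun _ => b)) := by
      intro s
      have h4 : s.piecewise (fun _ : Fin m => lam • h) (fun _ => b)
          = s.piecewise (fun i => lam • (s.piecewise (fun _ : Fin m => h) (fun _ => b)) i)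
              (s.piecewise (fun _ : Fin m => h) (fun _ => b)) := by
        funext i
        by_cases hi : i ∈ s <;> simp [hi]
      rw [h4]
      have h5 := MultilinearMap.map_piecewise_smul M.toMultilinearMap (fun _ => lam)
          (s.piecewise (fun _ : Fin m => h) (fun _ => b)) s
      simpa [Finset.prod_const] using h5
    calc M (fun _ : Fin m => b + lam • h)
        = M.toMultilinearMap ((fun _ : Fin m => lam • h) + (fun _ => b)) := by rw [← h1]; rfl
      _ = ∑ s : Finset (Fin m),
            M.toMultilinearMap (s.piecewise (fun _ => lam • h) (fun _ => b)) :=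
          MultilinearMap.map_add_univ _ _ _
      _ = ∑ s : Finset (Fin m), lam ^ s.card • M (s.piecewise (fun _ => h) (fun _ => b)) :=
          Finset.sum_congr rfl fun s _ => h3 s
      _ = ∑ k ∈ Finset.range (m + 1), ∑ s ∈ Finset.univ.filter
            (fun s : Finset (Fin m) => s.card = k),
            lam ^ s.card • M (s.piecewise (fun _ => h) (fun _ => b)) :=
          (Finset.sum_fiberwise_of_maps_to (fun s _ => Finset.mem_range.2
            (Nat.lt_succ_of_le (by simpa using Finset.card_le_univ s))) _).symm
      _ = ∑ k ∈ Finset.range (m + 1), lam ^ k • e k := by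
          refine Finset.sum_congr rfl fun k _ => ?_
          rw [hedef, Finset.smul_sum]
          exact Finset.sum_congr rfl fun s hs => by rw [(Finset.mem_filter.1 hs).2]
  -- coefficient extraction via roots of unity
  have hext : ∀ k, k ≤ m → ((m + 1 : ℕ) : ℂ) • e k
      = ∑ t ∈ Finset.range (m + 1), ω ^ (t * (m + 1 - k)) • M (fun _ => b + ω ^ t • h) := by
    intro k hk
    set aa : ℕ := m + 1 - k with haadef
    have haa : k + aa = m + 1 := by omega
    have key : ∀ l ∈ Finset.range (m + 1),
        (∑ t ∈ Finset.range (m + 1), (ω ^ (aa + l)) ^ t)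
          = if l = k then ((m + 1 : ℕ) : ℂ) else 0 := by
      intro l hl
      rw [Finset.mem_range] at hl
      by_cases hlk : l = k
      · subst hlk
        have h5 : aa + l = m + 1 := by omega
        simp [h5, hω1]
      · have hne1 : ω ^ (aa + l) ≠ 1 := by
          intro hcon
          rw [hωprim.pow_eq_one_iff_dvd] at hcon
          have h1 : m + 1 ≤ aa + l := Nat.le_of_dvd (by omega) hcon
          have h2 : (m + 1 : ℕ) ∣ (aa + l - (m + 1)) := Nat.dvd_sub hcon dvd_rfl
          have h3 : aa + l - (m + 1) < m + 1 := by omega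
          have h4 : aa + l - (m + 1) = 0 := Nat.eq_zero_of_dvd_of_lt h2 h3
          omega
        have hpow1 : (ω ^ (aa + l)) ^ (m + 1) = 1 := by
          rw [← pow_mul, mul_comm, pow_mul, hω1, one_pow]
        rw [geom_sum_eq hne1, hpow1]
        simp [hlk]
    refine Eq.symm ?_
    calc ∑ t ∈ Finset.range (m + 1), ω ^ (t * aa) • M (fun _ => b + ω ^ t • h)
        = ∑ t ∈ Finset.range (m + 1), ∑ l ∈ Finset.range (m + 1),
            (ω ^ (aa + l)) ^ t • e l := by
          refine Finset.sum_congr rfl fun t _ => ?_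
          rw [hQ (ω ^ t), Finset.smul_sum]
          refine Finset.sum_congr rfl fun l _ => ?_
          rw [smul_smul]
          congr 1
          rw [← pow_mul, ← pow_add, ← pow_mul]
          congr 1
          ring
      _ = ∑ l ∈ Finset.range (m + 1),
            (∑ t ∈ Finset.range (m + 1), (ω ^ (aa + l)) ^ t) • e l := by
          rw [Finset.sum_comm]
          exact Finset.sum_congr rfl fun l _ => (Finset.sum_smul).symm
      _ = ((m + 1 : ℕ) : ℂ) • e k := by
          rw [Finset.sum_eq_single k
            (fun l hl hlk => by rw [key l hl, if_neg hlk, zero_smul])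
            (fun hk' => absurd (Finset.mem_range.2 (Nat.lt_succ_of_le hk)) hk'),
            key k (Finset.mem_range.2 (Nat.lt_succ_of_le hk)), if_pos rfl]
  -- norm bound for coefficients
  have he : ∀ k, k ≤ m → ‖e k‖ ≤ C := by
    intro k hk
    have h2 : ‖((m + 1 : ℕ) : ℂ) • e k‖ = ((m + 1 : ℕ) : ℝ) * ‖e k‖ := by
      rw [norm_smul, Complex.norm_natCast]
    have h3 : ‖∑ t ∈ Finset.range (m + 1),
        ω ^ (t * (m + 1 - k)) • M (fun _ => b + ω ^ t • h)‖
          ≤ ∑ _t ∈ Finset.range (m + 1), C := by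
      refine (norm_sum_le _ _).trans (Finset.sum_le_sum fun t ht => ?_)
      rw [norm_smul, norm_pow, hωnorm, one_pow, one_mul]
      exact hC t (Nat.lt_succ_iff.mp (Finset.mem_range.1 ht))
    have h4 : ((m + 1 : ℕ) : ℝ) * ‖e k‖ ≤ ((m + 1 : ℕ) : ℝ) * C := by
      rw [← h2, hext k hk]
      simpa using h3
    have hpos : (0 : ℝ) < ((m + 1 : ℕ) : ℝ) := by positivity
    exact le_of_mul_le_mul_left h4 hpos
  -- identify endpoints
  have hxQ : M (fun _ : Fin m => a) = ∑ k ∈ Finset.range (m + 1), ((n : ℝ) : ℂ) ^ k • e k := by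
    have hfun : (fun _ : Fin m => a) = (fun _ : Fin m => b + ((n : ℝ) : ℂ) • h) := by
      funext i
      rw [hhdef, smul_smul, mul_inv_cancel₀
        (by exact_mod_cast hn.ne' : ((n : ℝ) : ℂ) ≠ 0), one_smul]
      abel
    rw [hfun, hQ]
  have hyQ : M (fun _ : Fin m => b) = e 0 := by
    have hfun : (fun _ : Fin m => b) = (fun _ : Fin m => b + (0 : ℂ) • h) := by
      funext i; simp
    rw [hfun, hQ, Finset.sum_eq_single 0
      (fun k _ hk0 => by rw [zero_pow hk0, zero_smul])
      (fun hk' => absurd (Finset.mem_range.2 (Nat.succ_pos m)) hk')]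
    simp
  have hsplit : Finset.range (m + 1) = insert 0 (Finset.Ico 1 (m + 1)) := by
    ext t
    simp only [Finset.mem_range, Finset.mem_insert, Finset.mem_Ico]
    omega
  have hdiff : M (fun _ : Fin m => a) - M (fun _ : Fin m => b)
      = ∑ k ∈ Finset.Ico 1 (m + 1), ((n : ℝ) : ℂ) ^ k • e k := by
    rw [hxQ, hyQ, hsplit, Finset.sum_insert (by simp)]
    simp
  have hbound : ‖M (fun _ : Fin m => a) - M (fun _ : Fin m => b)‖
      ≤ ∑ k ∈ Finset.Ico 1 (m + 1), n * 2 ^ (k - 1) * C := by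
    rw [hdiff]
    refine (norm_sum_le _ _).trans (Finset.sum_le_sum fun k hk => ?_)
    rw [norm_smul, norm_pow, Complex.norm_real, Real.norm_eq_abs, abs_of_pos hn]
    have hk1 : 1 ≤ k := (Finset.mem_Ico.1 hk).1
    have hnk : n ^ k ≤ n * 2 ^ (k - 1) := by
      have hkk : 1 + (k - 1) = k := by omega
      calc n ^ k = n ^ 1 * n ^ (k - 1) := by rw [← pow_add, hkk]
        _ = n * n ^ (k - 1) := by rw [pow_one]
        _ ≤ n * 2 ^ (k - 1) := by
            have := pow_le_pow_left₀ hn.le hab2 (k - 1)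
            nlinarith [pow_nonneg hn.le (k - 1)]
    calc n ^ k * ‖e k‖ ≤ (n * 2 ^ (k - 1)) * C := by
          exact mul_le_mul hnk (he k (Nat.lt_succ_iff.mp (Finset.mem_Ico.1 hk).2))
            (norm_nonneg _) (by positivity)
      _ = n * 2 ^ (k - 1) * C := rfl
  have hsum : ∑ k ∈ Finset.Ico 1 (m + 1), n * 2 ^ (k - 1) * C = n * (2 ^ m - 1) * C := by
    rw [Finset.sum_Ico_eq_sum_range]
    simp only [Nat.add_sub_cancel]
    have hterm : ∀ i, n * 2 ^ (1 + i - 1) * C = n * C * 2 ^ i := by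
      intro i
      have : 1 + i - 1 = i := by omega
      rw [this]; ring
    rw [Finset.sum_congr rfl fun i _ => hterm i, ← Finset.mul_sum,
      geom_sum_eq (by norm_num : (2 : ℝ) ≠ 1) m]
    ring
  calc ‖M (fun _ : Fin m => a) - M (fun _ : Fin m => b)‖
      ≤ ∑ k ∈ Finset.Ico 1 (m + 1), n * 2 ^ (k - 1) * C := hbound
    _ = n * (2 ^ m - 1) * C := hsum

/-- Given `m ≥ 1`, positive `α_j → 0` and points `x_j ≠ y_j` in `B_X`,
there is a compact `K ⊆ X` such that every continuous symmetric `m`-linear map `M`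
with associated `m`-homogeneous polynomial `P(x) = M(x,…,x)` satisfies
`sup_j α_j ‖P(x_j) − P(y_j)‖/‖x_j − y_j‖ ≤ ((2^m − 1)/m!) · sup_{u ∈ K} ‖P(u)‖`. -/
theorem stmt_15 {X Y : Type*} [NormedAddCommGroup X] [NormedSpace ℂ X] [CompleteSpace X]
    [NormedAddCommGroup Y] [NormedSpace ℂ Y] [CompleteSpace Y]
    (m : ℕ) (hm : 1 ≤ m) (α : ℕ → ℝ) (hα : ∀ j, 0 < α j)
    (hα0 : Filter.Tendsto α Filter.atTop (nhds 0))
    (x y : ℕ → X)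
    (hx : ∀ j, x j ∈ Metric.ball (0 : X) 1) (hy : ∀ j, y j ∈ Metric.ball (0 : X) 1)
    (hxy : ∀ j, x j ≠ y j) :
    ∃ K : Set X, IsCompact K ∧
      ∀ M : ContinuousMultilinearMap ℂ (fun _ : Fin m => X) Y,
        (∀ (σ : Equiv.Perm (Fin m)) (v : Fin m → X), M (v ∘ σ) = M v) →
        ∀ j, α j * ‖M (fun _ => x j) - M (fun _ => y j)‖ / ‖x j - y j‖ ≤
          ((2 ^ m - 1 : ℝ) / m.factorial) *
            sSup {c : ℝ | ∃ u ∈ K, ‖M (fun _ => u)‖ = c} := by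
  classical
  have hm0 : (0 : ℝ) < (m : ℝ) := by exact_mod_cast Nat.lt_of_lt_of_le Nat.zero_lt_one hm
  have hfac : (0 : ℝ) < (m.factorial : ℝ) := by exact_mod_cast m.factorial_pos
  set β : ℕ → ℝ := fun j => (α j * m.factorial) ^ ((m : ℝ)⁻¹) with hβdef
  have hαm : ∀ j, 0 < α j * (m.factorial : ℝ) := fun j => mul_pos (hα j) hfac
  have hβpos : ∀ j, 0 < β j := fun j => Real.rpow_pos_of_pos (hαm j) _
  have hβpow : ∀ j, β j ^ m = α j * m.factorial := by
    intro j
    rw [hβdef, ← Real.rpow_natCast ((α j * m.factorial) ^ ((m : ℝ)⁻¹)) m,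
      ← Real.rpow_mul (hαm j).le, inv_mul_cancel₀ hm0.ne', Real.rpow_one]
  have hβ0 : Filter.Tendsto β Filter.atTop (nhds 0) := by
    have h1 : Filter.Tendsto (fun j => α j * (m.factorial : ℝ)) Filter.atTop (nhds 0) := by
      simpa using hα0.mul_const (m.factorial : ℝ)
    have h2 : ContinuousAt (fun s : ℝ => s ^ ((m : ℝ)⁻¹)) 0 :=
      Real.continuousAt_rpow_const 0 _ (Or.inr (by positivity))
    have h3 := h2.tendsto.comp h1
    simpa [hβdef, Function.comp_def, Real.zero_rpow (by positivity : ((m : ℝ)⁻¹) ≠ 0)] using h3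
  set ω : ℂ := Complex.exp (2 * Real.pi * Complex.I / (m + 1)) with hωdef
  have hm1 : (m + 1 : ℕ) ≠ 0 := Nat.succ_ne_zero m
  have hωnorm : ‖ω‖ = 1 := by
    have hωprim : IsPrimitiveRoot ω (m + 1) := by
      have := Complex.isPrimitiveRoot_exp (m + 1) hm1
      have hcast : ((m + 1 : ℕ) : ℂ) = (m : ℂ) + 1 := by push_cast; ring
      rwa [hcast] at this
    exact Complex.norm_eq_one_of_pow_eq_one hωprim.pow_eq_one hm1
  have hn : ∀ j, (0 : ℝ) < ‖x j - y j‖ := fun j => norm_pos_iff.2 (sub_ne_zero.2 (hxy j))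
  set u : ℕ × Fin (m + 1) → X := fun p =>
    y p.1 + ω ^ (p.2 : ℕ) • (((‖x p.1 - y p.1‖ : ℝ) : ℂ)⁻¹ • (x p.1 - y p.1)) with hudef
  have hu2 : ∀ p, ‖u p‖ ≤ 2 := by
    intro p
    have hy1 : ‖y p.1‖ < 1 := by simpa [mem_ball_zero_iff] using hy p.1
    have hdir : ‖(((‖x p.1 - y p.1‖ : ℝ) : ℂ))⁻¹ • (x p.1 - y p.1)‖ = 1 := by
      rw [norm_smul, norm_inv, Complex.norm_real, Real.norm_eq_abs,
        abs_of_pos (hn p.1), inv_mul_cancel₀ (hn p.1).ne']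
    calc ‖u p‖ ≤ ‖y p.1‖ + ‖ω ^ (p.2 : ℕ) •
          (((‖x p.1 - y p.1‖ : ℝ) : ℂ))⁻¹ • (x p.1 - y p.1)‖ := norm_add_le _ _
      _ = ‖y p.1‖ + 1 := by rw [norm_smul, norm_pow, hωnorm, one_pow, one_mul, hdir]
      _ ≤ 2 := by linarith
  set z : ℕ × Fin (m + 1) → X := fun p => ((β p.1 : ℝ) : ℂ) • u p with hzdef
  have hz0 : Filter.Tendsto z Filter.cofinite (nhds 0) := by
    rw [Metric.tendsto_nhds]
    intro ε hε
    rw [Filter.eventually_cofinite]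
    have hfin : {j : ℕ | ¬ β j < ε / 2}.Finite := by
      have hev : ∀ᶠ j in Filter.atTop, β j < ε / 2 :=
        hβ0.eventually_lt_const (by positivity)
      rw [← Nat.cofinite_eq_atTop, Filter.eventually_cofinite] at hev
      exact hev
    refine Set.Finite.subset (hfin.prod (Set.finite_univ (α := Fin (m + 1)))) ?_
    intro p hp
    simp only [Set.mem_setOf_eq, not_lt] at hp
    refine Set.mem_prod.2 ⟨?_, Set.mem_univ _⟩
    simp only [Set.mem_setOf_eq, not_lt]
    have hznorm : ‖z p‖ ≤ 2 * β p.1 := by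
      rw [hzdef]
      simp only []
      rw [norm_smul, Complex.norm_real, Real.norm_eq_abs, abs_of_pos (hβpos p.1)]
      nlinarith [hu2 p, (hβpos p.1).le, norm_nonneg (u p)]
    have hεz : ε ≤ ‖z p‖ := by simpa [dist_zero_right] using hp
    linarith
  have hKc : IsCompact (insert (0 : X) (Set.range z)) :=
    hz0.isCompact_insert_range_of_cofinite
  refine ⟨insert 0 (Set.range z), hKc, ?_⟩
  intro M _ j
  set S := sSup {c : ℝ | ∃ v ∈ insert (0 : X) (Set.range z), ‖M (fun _ : Fin m => v)‖ = c}
    with hSdef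
  have hcontP : Continuous (fun v : X => ‖M (fun _ : Fin m => v)‖) :=
    (M.cont.comp (continuous_pi fun _ => continuous_id)).norm
  have hseteq : {c : ℝ | ∃ v ∈ insert (0 : X) (Set.range z), ‖M (fun _ : Fin m => v)‖ = c}
      = (fun v : X => ‖M (fun _ : Fin m => v)‖) '' (insert 0 (Set.range z)) := rfl
  have hbdd : BddAbove {c : ℝ | ∃ v ∈ insert (0 : X) (Set.range z),
      ‖M (fun _ : Fin m => v)‖ = c} := by
    rw [hseteq]; exact (hKc.image hcontP).bddAbove
  have hmem : ∀ p, ‖M (fun _ : Fin m => z p)‖ ≤ S :=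
    fun p => le_csSup hbdd ⟨z p, Set.mem_insert_of_mem _ ⟨p, rfl⟩, rfl⟩
  have hS0 : (0 : ℝ) ≤ S := le_trans (norm_nonneg _) (hmem (0, ⟨0, Nat.succ_pos m⟩))
  have hscale : ∀ p : ℕ × Fin (m + 1),
      ‖M (fun _ : Fin m => u p)‖ ≤ (β p.1 ^ m)⁻¹ * S := by
    intro p
    have h1 : M (fun _ : Fin m => z p)
        = (((β p.1 : ℝ) : ℂ) ^ m) • M (fun _ : Fin m => u p) := by
      have h5 := MultilinearMap.map_smul_univ M.toMultilinearMap
        (fun _ : Fin m => ((β p.1 : ℝ) : ℂ)) (fun _ : Fin m => u p)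
      simpa [hzdef, Finset.prod_const, Finset.card_univ] using h5
    have h2 : ‖M (fun _ : Fin m => z p)‖ = β p.1 ^ m * ‖M (fun _ : Fin m => u p)‖ := by
      rw [h1, norm_smul, norm_pow, Complex.norm_real, Real.norm_eq_abs,
        abs_of_pos (hβpos p.1)]
    have h3 := hmem p
    rw [h2] at h3
    rw [inv_mul_eq_div, le_div_iff₀ (pow_pos (hβpos p.1) m)]
    linarith
  have hab2 : ‖x j - y j‖ ≤ 2 := by
    have h1 : ‖x j‖ < 1 := by simpa [mem_ball_zero_iff] using hx j
    have h2 : ‖y j‖ < 1 := by simpa [mem_ball_zero_iff] using hy j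
    calc ‖x j - y j‖ ≤ ‖x j‖ + ‖y j‖ := norm_sub_le _ _
      _ ≤ 2 := by linarith
  have hCval : ∀ t : ℕ, t ≤ m →
      ‖M (fun _ : Fin m => y j + ω ^ t •
        (((‖x j - y j‖ : ℝ) : ℂ)⁻¹ • (x j - y j)))‖ ≤ (α j * m.factorial)⁻¹ * S := by
    intro t ht
    have := hscale (j, ⟨t, Nat.lt_succ_of_le ht⟩)
    rw [hβpow j] at this
    simpa [hudef] using this
  have hkey := aux_bound m hm M (x j) (y j) (hxy j) hab2
    ((α j * m.factorial)⁻¹ * S) (mul_nonneg (inv_nonneg.2 (hαm j).le) hS0) (by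
      intro t ht
      simpa [hωdef] using hCval t ht)
  have hnj := hn j
  have hαj := hα j
  calc α j * ‖M (fun _ : Fin m => x j) - M (fun _ : Fin m => y j)‖ / ‖x j - y j‖
      ≤ α j * (‖x j - y j‖ * (2 ^ m - 1) * ((α j * m.factorial)⁻¹ * S)) / ‖x j - y j‖ := by
        have h2m : (0 : ℝ) ≤ 2 ^ m - 1 := by
          have : (1 : ℝ) ≤ 2 ^ m := by exact_mod_cast Nat.one_le_two_pow
          linarith
        gcongr
    _ = ((2 ^ m - 1 : ℝ) / m.factorial) * S := by
        field_simp
end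

section
/- Consider, inside the complex vector space of all functions from 𝔻 to ℂ, the convex sets B₁ = {f : f is holomorphic on 𝔻, f(0) = 0, and f is 1-Lipschitz on 𝔻} and B₂ = {g : g is holomorphic on 𝔻 and |g(z)| ≤ 1 for all z ∈ 𝔻}. Then f ∈ B₁ is an extreme point of B₁ if and only if its derivative f′ is an extreme point of B₂. -/
/-- An extreme point of a convex set `s` in a complex vector space: a point of `s` that
is not the midpoint of two points of `s` other than itself. -/
def IsExtremePointOf {E : Type*} [AddCommGroup E] [Module ℂ E] (s : Set E) (x : E) : Prop :=
  x ∈ s ∧ ∀ y ∈ s, ∀ z ∈ s, x = (2⁻¹ : ℂ) • (y + z) → y = x ∧ z = x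

open Metric Set
open scoped NNReal ENNReal

/-- The derivative of a holomorphic function on the unit ball is holomorphic there. -/
lemma aux17_deriv_diffOn {u : ℂ → ℂ} (h : DifferentiableOn ℂ u (ball (0:ℂ) 1)) :
    DifferentiableOn ℂ (deriv u) (ball (0:ℂ) 1) :=
  ((h.analyticOnNhd isOpen_ball).deriv).differentiableOn

/-- A 1-Lipschitz holomorphic function on the ball has derivative bounded by 1. -/
lemma aux17_deriv_bound {u : ℂ → ℂ} (h : DifferentiableOn ℂ u (ball (0:ℂ) 1))
    (hl : LipschitzOnWith 1 u (ball (0:ℂ) 1)) :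
    ∀ z ∈ ball (0:ℂ) 1, ‖deriv u z‖ ≤ 1 := by
  intro z hz
  have hd : DifferentiableAt ℂ u z := h.differentiableAt (isOpen_ball.mem_nhds hz)
  have h1 : ‖fderiv ℂ u z‖ ≤ 1 := by
    have := hd.hasFDerivAt.le_of_lipschitzOn (isOpen_ball.mem_nhds hz) hl
    simpa using this
  have h2 : deriv u z = fderiv ℂ u z 1 := rfl
  calc ‖deriv u z‖ = ‖fderiv ℂ u z 1‖ := by rw [h2]
    _ ≤ ‖fderiv ℂ u z‖ * ‖(1:ℂ)‖ := (fderiv ℂ u z).le_opNorm 1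
    _ ≤ 1 := by simpa using h1

lemma aux17_eqOn_deriv {u f : ℂ → ℂ} (h : EqOn u f (ball (0:ℂ) 1)) :
    EqOn (deriv u) (deriv f) (ball (0:ℂ) 1) := fun _ hz =>
  Filter.EventuallyEq.deriv_eq (Filter.eventuallyEq_of_mem (isOpen_ball.mem_nhds hz) h)

/-- A holomorphic function with derivative bounded by 1 on the ball is 1-Lipschitz there. -/
lemma aux17_lip_of_bound {u : ℂ → ℂ} (h : DifferentiableOn ℂ u (ball (0:ℂ) 1))
    (hb : ∀ z ∈ ball (0:ℂ) 1, ‖deriv u z‖ ≤ 1) :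
    LipschitzOnWith 1 u (ball (0:ℂ) 1) := by
  apply (convex_ball (0:ℂ) 1).lipschitzOnWith_of_nnnorm_hasDerivWithin_le (f' := deriv u)
  · intro z hz
    exact ((h.differentiableAt (isOpen_ball.mem_nhds hz)).hasDerivAt).hasDerivWithinAt
  · intro z hz
    exact_mod_cast hb z hz

/-- Two holomorphic functions on the ball with the same derivative and same value at 0
agree on the ball. -/
lemma aux17_eq_of_deriv_eq {u f : ℂ → ℂ} (hu : DifferentiableOn ℂ u (ball (0:ℂ) 1))
    (hf : DifferentiableOn ℂ f (ball (0:ℂ) 1)) (h0 : u 0 = f 0)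
    (h : EqOn (deriv u) (deriv f) (ball (0:ℂ) 1)) :
    EqOn u f (ball (0:ℂ) 1) := by
  intro z hz
  have key : ∀ x ∈ ball (0:ℂ) 1, HasDerivWithinAt (fun w => u w - f w) 0 (ball (0:ℂ) 1) x := by
    intro x hx
    have h1 := (hu.differentiableAt (isOpen_ball.mem_nhds hx)).hasDerivAt
    have h2 := (hf.differentiableAt (isOpen_ball.mem_nhds hx)).hasDerivAt
    have h3 : HasDerivWithinAt (fun w => u w - f w) (deriv u x - deriv f x) (ball (0:ℂ) 1) x :=
      (h1.sub h2).hasDerivWithinAt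
    rwa [h hx, sub_self] at h3
  have h0' : (0:ℂ) ∈ ball (0:ℂ) 1 := by simp
  have hb := (convex_ball (0:ℂ) 1).norm_image_sub_le_of_norm_hasDerivWithin_le (C := 0)
    key (fun x _ => by simp) h0' hz
  rw [zero_mul, h0] at hb
  have h4 : u z - f z - (f 0 - f 0) = 0 := norm_le_zero_iff.mp hb
  have h5 : u z - f z = 0 := by linear_combination h4
  exact sub_eq_zero.mp h5

/-- Every holomorphic function on the unit disc has a primitive. -/
lemma aux17_exists_primitive (v : ℂ → ℂ) (hv : DifferentiableOn ℂ v (ball (0:ℂ) 1)) :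
    ∃ u : ℂ → ℂ, u 0 = 0 ∧ ∀ z ∈ ball (0:ℂ) 1, HasDerivAt u (v z) z := by
  set p : FormalMultilinearSeries ℂ ℂ ℂ := cauchyPowerSeries v 0 (2⁻¹ : ℝ≥0) with hp
  have hsub : ∀ ρ : ℝ≥0, (ρ:ℝ) < 1 → closedBall (0:ℂ) ρ ⊆ ball (0:ℂ) 1 := by
    intro ρ hρ x hx
    simp only [mem_closedBall, mem_ball] at hx ⊢
    linarith [hx]
  have h0 : HasFPowerSeriesOnBall v p 0 (2⁻¹ : ℝ≥0) :=
    (hv.mono (hsub _ (by norm_num))).hasFPowerSeriesOnBall (by norm_num)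
  have key : ∀ ρ : ℝ≥0, 0 < ρ → (ρ:ℝ) < 1 → HasFPowerSeriesOnBall v p 0 ρ := by
    intro ρ h1 h2
    have hρ : HasFPowerSeriesOnBall v (cauchyPowerSeries v 0 ρ) 0 ρ :=
      (hv.mono (hsub _ h2)).hasFPowerSeriesOnBall h1
    rwa [h0.hasFPowerSeriesAt.eq_formalMultilinearSeries hρ.hasFPowerSeriesAt]
  set a : ℕ → ℂ := fun n => p.coeff n with ha
  refine ⟨fun z => ∑' n, (a n / (n+1)) * z^(n+1), ?_, ?_⟩
  · show (∑' n : ℕ, a n / (n+1) * (0:ℂ)^(n+1)) = 0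
    have h : (fun n : ℕ => a n / (n+1) * (0:ℂ)^(n+1)) = fun _ => 0 := by
      funext n; simp
    rw [h, tsum_zero]
  intro z₀ hz₀
  simp only [mem_ball, dist_zero_right] at hz₀
  set r₂ : ℝ := (‖z₀‖ + 1) / 2 with hr₂
  set r₁ : ℝ := (‖z₀‖ + r₂) / 2 with hr₁
  have hn : 0 ≤ ‖z₀‖ := norm_nonneg _
  have h21 : r₂ < 1 := by rw [hr₂]; linarith
  have hz2 : ‖z₀‖ < r₂ := by rw [hr₂]; linarith
  have h12 : r₁ < r₂ := by rw [hr₁]; linarith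
  have hz1 : ‖z₀‖ < r₁ := by rw [hr₁]; linarith
  have h1pos : 0 < r₁ := by positivity
  have h2pos : 0 < r₂ := by positivity
  have hball : HasFPowerSeriesOnBall v p 0 r₂.toNNReal :=
    key _ (by simpa using h2pos) (by rwa [Real.coe_toNNReal _ h2pos.le])
  have hrad : (r₁.toNNReal : ℝ≥0∞) < p.radius := by
    refine lt_of_lt_of_le ?_ hball.r_le
    rw [ENNReal.coe_lt_coe]
    exact_mod_cast (by rwa [← Real.toNNReal_lt_toNNReal_iff h2pos] at h12 :
      r₁.toNNReal < r₂.toNNReal)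
  have S : Summable (fun n => ‖p n‖ * r₁ ^ n) := by
    have := p.summable_norm_mul_pow hrad
    simpa [Real.coe_toNNReal _ h1pos.le] using this
  have hcoeff : ∀ n, ‖a n‖ ≤ ‖p n‖ := by
    intro n
    have h := (p n).le_opNorm (fun _ => (1:ℂ))
    simp only [norm_one, Finset.prod_const, one_pow, mul_one] at h
    have he : a n = p n (fun _ => 1) := rfl
    rw [he]
    exact h
  have main := hasDerivAt_tsum_of_isPreconnected S isOpen_ball
    (convex_ball (0:ℂ) r₁).isPreconnected
    (g := fun n z => (a n / (n+1)) * z^(n+1)) (g' := fun n z => a n * z^n)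
    (y₀ := 0) (y := z₀) ?_ ?_ (by simpa using h1pos) ?_ (by simpa using hz1)
  · have hsum : HasSum (fun n => a n * z₀ ^ n) (v z₀) := by
      have hmem : z₀ ∈ Metric.eball (0:ℂ) r₂.toNNReal := by
        simp only [Metric.mem_eball, edist_zero_right]
        have h1 : ‖z₀‖₊ < r₂.toNNReal :=
          Real.lt_toNNReal_iff_coe_lt.mpr (by simpa using hz2)
        exact_mod_cast h1
      have := hball.hasSum hmem
      simp only [zero_add] at this
      convert this using 2 with n
      · rfl
      rw [FormalMultilinearSeries.apply_eq_pow_smul_coeff]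
      simp [ha, mul_comm]
    rw [hsum.tsum_eq] at main
    exact main
  · intro n y hy
    have hd : HasDerivAt (fun z : ℂ => z^(n+1)) ((n+1 : ℕ) * y^n) y := by
      simpa using hasDerivAt_pow (n+1) y
    have := hd.const_mul (a n / (n+1))
    convert this using 1
    · rfl
    have hne : ((n:ℂ)+1) ≠ 0 := Nat.cast_add_one_ne_zero n
    push_cast
    field_simp
  · intro n y hy
    simp only [mem_ball, dist_zero_right] at hy
    calc ‖a n * y^n‖ = ‖a n‖ * ‖y‖^n := by simp [norm_pow]
      _ ≤ ‖p n‖ * r₁^n := by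
          apply mul_le_mul (hcoeff n) (pow_le_pow_left₀ (norm_nonneg _) hy.le n)
            (by positivity) (norm_nonneg _)
  · apply Summable.congr summable_zero
    intro n; simp

/-- A holomorphic function bounded by 1 on the disc has a primitive in the Lipschitz unit ball. -/
lemma aux17_primitive (v : ℂ → ℂ) (hv : DifferentiableOn ℂ v (ball (0:ℂ) 1))
    (hb : ∀ z ∈ ball (0:ℂ) 1, ‖v z‖ ≤ 1) :
    ∃ u : ℂ → ℂ, DifferentiableOn ℂ u (ball (0:ℂ) 1) ∧ u 0 = 0 ∧
      LipschitzOnWith 1 u (ball (0:ℂ) 1) ∧ EqOn (deriv u) v (ball (0:ℂ) 1) := by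
  obtain ⟨u, hu0, hud⟩ := aux17_exists_primitive v hv
  have hdiff : DifferentiableOn ℂ u (ball (0:ℂ) 1) := fun z hz =>
    (hud z hz).differentiableAt.differentiableWithinAt
  have heq : EqOn (deriv u) v (ball (0:ℂ) 1) := fun z hz => (hud z hz).deriv
  exact ⟨u, hdiff, hu0, aux17_lip_of_bound hdiff (fun z hz => (heq hz) ▸ hb z hz), heq⟩

/-- Derivative of the midpoint function. -/
lemma aux17_mid_hasDerivAt {u₁ u₂ : ℂ → ℂ} (h1 : DifferentiableOn ℂ u₁ (ball (0:ℂ) 1))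
    (h2 : DifferentiableOn ℂ u₂ (ball (0:ℂ) 1)) {z : ℂ} (hz : z ∈ ball (0:ℂ) 1) :
    HasDerivAt (fun w => (2⁻¹:ℂ) * (u₁ w + u₂ w)) (2⁻¹ * (deriv u₁ z + deriv u₂ z)) z := by
  have d1 := (h1.differentiableAt (isOpen_ball.mem_nhds hz)).hasDerivAt
  have d2 := (h2.differentiableAt (isOpen_ball.mem_nhds hz)).hasDerivAt
  exact (d1.add d2).const_mul _

/-- `f` is an extreme point of the closed unit ball of the holomorphic
`1`-Lipschitz functions on `𝔻` vanishing at `0` iff `f′` is an extreme point of the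
closed unit ball of `H^∞(𝔻)` (both viewed as sets of functions on `𝔻`). -/
theorem stmt_17 (f : ℂ → ℂ)
    (hf : DifferentiableOn ℂ f (Metric.ball (0 : ℂ) 1))
    (hf0 : f 0 = 0)
    (hlip : LipschitzOnWith 1 f (Metric.ball (0 : ℂ) 1)) :
    IsExtremePointOf
        {h : ↥(Metric.ball (0 : ℂ) 1) → ℂ | ∃ u : ℂ → ℂ,
          DifferentiableOn ℂ u (Metric.ball (0 : ℂ) 1) ∧ u 0 = 0 ∧
          LipschitzOnWith 1 u (Metric.ball (0 : ℂ) 1) ∧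
          h = (Metric.ball (0 : ℂ) 1).restrict u}
        ((Metric.ball (0 : ℂ) 1).restrict f) ↔
      IsExtremePointOf
        {h : ↥(Metric.ball (0 : ℂ) 1) → ℂ | ∃ v : ℂ → ℂ,
          DifferentiableOn ℂ v (Metric.ball (0 : ℂ) 1) ∧
          (∀ z ∈ Metric.ball (0 : ℂ) 1, ‖v z‖ ≤ 1) ∧
          h = (Metric.ball (0 : ℂ) 1).restrict v}
        ((Metric.ball (0 : ℂ) 1).restrict (deriv f)) := by

  have hB0 : (0:ℂ) ∈ ball (0:ℂ) 1 := by simp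
  constructor
  · rintro ⟨hmem, hext⟩
    refine ⟨⟨deriv f, aux17_deriv_diffOn hf, aux17_deriv_bound hf hlip, rfl⟩, ?_⟩
    rintro h₁ ⟨g₁, hg₁d, hg₁b, rfl⟩ h₂ ⟨g₂, hg₂d, hg₂b, rfl⟩ hmid
    obtain ⟨u₁, hu₁d, hu₁0, hu₁l, hu₁e⟩ := aux17_primitive g₁ hg₁d hg₁b
    obtain ⟨u₂, hu₂d, hu₂0, hu₂l, hu₂e⟩ := aux17_primitive g₂ hg₂d hg₂b
    -- pointwise form of the midpoint hypothesis
    have hmid' : ∀ z ∈ ball (0:ℂ) 1, deriv f z = 2⁻¹ * (g₁ z + g₂ z) := by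
      intro z hz
      have := congrFun hmid ⟨z, hz⟩
      simpa [Set.restrict, Set.restrict_apply, Pi.smul_apply, Pi.add_apply, smul_eq_mul] using this
    -- f equals the midpoint of u₁, u₂ on the ball
    have hmdiff : DifferentiableOn ℂ (fun w => (2⁻¹:ℂ) * (u₁ w + u₂ w)) (ball (0:ℂ) 1) :=
      fun z hz => (aux17_mid_hasDerivAt hu₁d hu₂d hz).differentiableAt.differentiableWithinAt
    have hmderiv : EqOn (deriv f) (deriv (fun w => (2⁻¹:ℂ) * (u₁ w + u₂ w))) (ball (0:ℂ) 1) := by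
      intro z hz
      rw [(aux17_mid_hasDerivAt hu₁d hu₂d hz).deriv, hmid' z hz, hu₁e hz, hu₂e hz]
    have hEq : EqOn f (fun w => (2⁻¹:ℂ) * (u₁ w + u₂ w)) (ball (0:ℂ) 1) :=
      aux17_eq_of_deriv_eq hf hmdiff (by simp [hf0, hu₁0, hu₂0]) hmderiv
    have hkey := hext ((ball (0:ℂ) 1).restrict u₁) ⟨u₁, hu₁d, hu₁0, hu₁l, rfl⟩
      ((ball (0:ℂ) 1).restrict u₂) ⟨u₂, hu₂d, hu₂0, hu₂l, rfl⟩ ?_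
    · obtain ⟨e₁, e₂⟩ := hkey
      have e₁' : EqOn u₁ f (ball (0:ℂ) 1) := Set.restrict_eq_restrict_iff.mp e₁
      have e₂' : EqOn u₂ f (ball (0:ℂ) 1) := Set.restrict_eq_restrict_iff.mp e₂
      constructor
      · apply Set.restrict_eq_restrict_iff.mpr
        intro z hz
        rw [← hu₁e hz]
        exact aux17_eqOn_deriv e₁' hz
      · apply Set.restrict_eq_restrict_iff.mpr
        intro z hz
        rw [← hu₂e hz]
        exact aux17_eqOn_deriv e₂' hz
    · funext z
      have := hEq z.2
      simpa [Set.restrict, Set.restrict_apply, Pi.smul_apply, Pi.add_apply, smul_eq_mul] using this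
  · rintro ⟨hmem, hext⟩
    refine ⟨⟨f, hf, hf0, hlip, rfl⟩, ?_⟩
    rintro h₁ ⟨u₁, hu₁d, hu₁0, hu₁l, rfl⟩ h₂ ⟨u₂, hu₂d, hu₂0, hu₂l, rfl⟩ hmid
    have hmid' : ∀ z ∈ ball (0:ℂ) 1, f z = 2⁻¹ * (u₁ z + u₂ z) := by
      intro z hz
      have := congrFun hmid ⟨z, hz⟩
      simpa [Set.restrict, Set.restrict_apply, Pi.smul_apply, Pi.add_apply, smul_eq_mul] using this
    have hEq : EqOn f (fun w => (2⁻¹:ℂ) * (u₁ w + u₂ w)) (ball (0:ℂ) 1) := fun z hz => hmid' z hz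
    have hder : EqOn (deriv f) (fun z => 2⁻¹ * (deriv u₁ z + deriv u₂ z)) (ball (0:ℂ) 1) := by
      intro z hz
      rw [aux17_eqOn_deriv hEq hz, (aux17_mid_hasDerivAt hu₁d hu₂d hz).deriv]
    have hkey := hext ((ball (0:ℂ) 1).restrict (deriv u₁))
      ⟨deriv u₁, aux17_deriv_diffOn hu₁d, aux17_deriv_bound hu₁d hu₁l, rfl⟩
      ((ball (0:ℂ) 1).restrict (deriv u₂))
      ⟨deriv u₂, aux17_deriv_diffOn hu₂d, aux17_deriv_bound hu₂d hu₂l, rfl⟩ ?_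
    · obtain ⟨e₁, e₂⟩ := hkey
      have e₁' : EqOn (deriv u₁) (deriv f) (ball (0:ℂ) 1) := Set.restrict_eq_restrict_iff.mp e₁
      have e₂' : EqOn (deriv u₂) (deriv f) (ball (0:ℂ) 1) := Set.restrict_eq_restrict_iff.mp e₂
      constructor
      · exact Set.restrict_eq_restrict_iff.mpr
          (aux17_eq_of_deriv_eq hu₁d hf (by rw [hu₁0, hf0]) e₁')
      · exact Set.restrict_eq_restrict_iff.mpr
          (aux17_eq_of_deriv_eq hu₂d hf (by rw [hu₂0, hf0]) e₂')
    · funext z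
      have := hder z.2
      simpa [Set.restrict, Set.restrict_apply, Pi.smul_apply, Pi.add_apply, smul_eq_mul] using this
end

section
/- Let X be a complex Banach space. The set of all functions h : B_X → ℂ that arise as restrictions to B_X of functions f : X → ℂ which are holomorphic on B_X, satisfy f(0) = 0, and are 1-Lipschitz on B_X, is a compact subset of the space of all functions from B_X to ℂ endowed with the topology of pointwise convergence (the product topology). -/
open Metric Set Filter Topology
open scoped NNReal


open Metric Set Filter Topology
open scoped NNReal

/-- Schwarz-type remainder bound: a holomorphic `L`-Lipschitz function on a disc of
radius `R > 1` satisfies `‖g 1 - g 0 - g' 0‖ ≤ 3 L / R`. -/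
lemma oneDim_remainder {R : ℝ} {L : ℝ≥0} (hR : 1 < R) (hL : 0 < L) {g : ℂ → ℂ}
    (hg : DifferentiableOn ℂ g (ball 0 R))
    (hlip : LipschitzOnWith L g (ball 0 R)) :
    ‖g 1 - g 0 - deriv g 0‖ ≤ 3 * L / R := by
  have hR0 : (0 : ℝ) < R := lt_trans one_pos hR
  have h0mem : (0 : ℂ) ∈ ball (0 : ℂ) R := mem_ball_self hR0
  have hnhds : ball (0 : ℂ) R ∈ 𝓝 (0 : ℂ) := isOpen_ball.mem_nhds h0mem
  set k : ℂ → ℂ := fun z => dslope g 0 z - deriv g 0 with hk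
  have hkdiff : DifferentiableOn ℂ k (ball 0 R) :=
    ((Complex.differentiableOn_dslope hnhds).mpr hg).sub_const _
  have hk0 : k 0 = 0 := by simp [hk, dslope_same]
  -- bound on deriv g 0
  have hgd : DifferentiableAt ℂ g 0 := hg.differentiableAt hnhds
  have hder : ‖deriv g 0‖ ≤ L := by
    have := hgd.hasDerivAt.hasFDerivAt.le_of_lipschitzOn hnhds hlip
    calc ‖deriv g 0‖ = ‖(ContinuousLinearMap.smulRight (1 : ℂ →L[ℂ] ℂ) (deriv g 0)) 1‖ := by
          simp
      _ ≤ ‖ContinuousLinearMap.smulRight (1 : ℂ →L[ℂ] ℂ) (deriv g 0)‖ * ‖(1:ℂ)‖ :=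
          ContinuousLinearMap.le_opNorm _ _
      _ ≤ L := by simpa using this
  -- bound on k
  have hkbound : MapsTo k (ball 0 R) (ball (k 0) (3 * L)) := by
    intro z hz
    rw [hk0, mem_ball, dist_zero_right]
    rcases eq_or_ne z 0 with rfl | hz0
    · rw [hk0, norm_zero]; positivity
    · have : ‖dslope g 0 z‖ ≤ L := by
        rw [dslope_of_ne _ hz0, slope_def_field]
        have hd : ‖g z - g 0‖ ≤ L * ‖z - 0‖ := hlip.norm_sub_le hz h0mem
        rw [sub_zero] at hd
        rw [div_eq_mul_inv, norm_mul, norm_inv]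
        rw [mul_inv_le_iff₀ (by simpa using norm_pos_iff.mpr hz0)]
        simpa [mul_comm] using hd
      calc ‖k z‖ ≤ ‖dslope g 0 z‖ + ‖deriv g 0‖ := norm_sub_le _ _
        _ ≤ L + L := add_le_add this hder
        _ < 3 * L := by
          have : (0:ℝ) < L := hL
          nlinarith
  have h1mem : (1 : ℂ) ∈ ball (0 : ℂ) R := by
    simpa [mem_ball, dist_zero_right] using hR
  have := Complex.dist_le_div_mul_dist_of_mapsTo_ball hkdiff (hkbound.mono_right ball_subset_closedBall) h1mem
  have hk1 : k 1 = g 1 - g 0 - deriv g 0 := by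
    rw [hk]; simp only
    rw [dslope_of_ne _ one_ne_zero, slope_def_field]
    simp
  rw [hk0, dist_zero_right, hk1] at this
  calc ‖g 1 - g 0 - deriv g 0‖ ≤ 3 * L / R * dist (1:ℂ) 0 := this
    _ = 3 * L / R := by simp

open Metric Set Filter Topology
open scoped NNReal

lemma tendstoUniformlyOn_of_lip {α ι : Type*} [PseudoMetricSpace α] {F : Filter ι}
    {Φ : ι → α → ℂ} {f : α → ℂ} {s K : Set α} (hK : IsCompact K) (hKs : K ⊆ s)
    (hΦ : ∀ n, LipschitzOnWith 1 (Φ n) s) (hf : LipschitzOnWith 1 f s)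
    (htend : ∀ x ∈ s, Tendsto (fun n => Φ n x) F (𝓝 (f x))) :
    TendstoUniformlyOn Φ f F K := by
  rw [Metric.tendstoUniformlyOn_iff]
  intro ε hε
  obtain ⟨t, hts, hcover⟩ := hK.elim_nhds_subcover (fun x => ball x (ε / 4))
    (fun x _ => ball_mem_nhds x (by positivity))
  have hev : ∀ᶠ n in F, ∀ i ∈ t, dist (Φ n i) (f i) < ε / 4 := by
    rw [Filter.eventually_all_finset]
    intro i hi
    have := (htend i (hKs (hts i hi)))
    exact (Metric.tendsto_nhds.mp this) (ε / 4) (by positivity)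
  filter_upwards [hev] with n hn x hxK
  obtain ⟨i, hit, hxi⟩ := mem_iUnion₂.mp (hcover hxK)
  have hxs : x ∈ s := hKs hxK
  have his : i ∈ s := hKs (hts i hit)
  have h1 : dist (f x) (f i) ≤ dist x i := by
    simpa using hf.dist_le_mul x hxs i his
  have h3 : dist (Φ n i) (Φ n x) ≤ dist i x := by
    simpa using (hΦ n).dist_le_mul i his x hxs
  have hxi' : dist x i < ε / 4 := mem_ball.mp hxi
  calc dist (f x) (Φ n x) ≤ dist (f x) (f i) + dist (f i) (Φ n i) + dist (Φ n i) (Φ n x) :=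
        dist_triangle4 _ _ _ _
    _ < ε := by
        rw [dist_comm (f i) (Φ n i)]
        have := hn i hit
        rw [dist_comm i x] at h3
        linarith


/-- The set of restrictions to `B_X` of holomorphic `1`-Lipschitz
functions `X → ℂ` vanishing at `0` is compact in the topology of pointwise
convergence on the space of all functions `B_X → ℂ`. -/
theorem stmt_18 {X : Type*} [NormedAddCommGroup X] [NormedSpace ℂ X] [CompleteSpace X] :
    IsCompact {h : ↥(Metric.ball (0 : X) 1) → ℂ | ∃ f : X → ℂ,
      DifferentiableOn ℂ f (Metric.ball (0 : X) 1) ∧ f 0 = 0 ∧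
      LipschitzOnWith 1 f (Metric.ball (0 : X) 1) ∧
      h = (Metric.ball (0 : X) 1).restrict f} := by
  classical
  set B : Set X := Metric.ball (0 : X) 1 with hBdef
  set S : Set (↥B → ℂ) := {h : ↥B → ℂ | ∃ f : X → ℂ,
      DifferentiableOn ℂ f B ∧ f 0 = 0 ∧ LipschitzOnWith 1 f B ∧
      h = B.restrict f} with hSdef
  have hBopen : IsOpen B := isOpen_ball
  have h0B : (0 : X) ∈ B := mem_ball_self one_pos
  refine IsCompact.of_isClosed_subset
    (isCompact_pi_infinite fun _ : ↥B => isCompact_closedBall (0 : ℂ) 1) ?_ ?_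
  swap
  · rintro h ⟨f, _, h0, hlip, rfl⟩ x
    have h1 : ‖f x.1 - f 0‖ ≤ 1 * ‖x.1 - 0‖ := hlip.norm_sub_le x.2 h0B
    have h2 : ‖x.1‖ < 1 := mem_ball_zero_iff.mp x.2
    simp only [h0, sub_zero, one_mul] at h1
    simp only [mem_closedBall, dist_zero_right]
    exact le_trans h1 h2.le
  rw [isClosed_iff_clusterPt]
  intro h hh
  haveI hne : (𝓝[S] h).NeBot := hh
  set F : Filter ↥S := Filter.comap Subtype.val (𝓝[S] h) with hFdef
  haveI hFne : F.NeBot := by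
    rw [hFdef]
    refine Filter.comap_neBot fun t ht => ?_
    obtain ⟨g, hgt, hgS⟩ := Filter.nonempty_of_mem (inter_mem ht self_mem_nhdsWithin)
    exact ⟨⟨g, hgS⟩, hgt⟩
  have hval : Tendsto (Subtype.val : ↥S → (↥B → ℂ)) F (𝓝 h) :=
    tendsto_comap.mono_right nhdsWithin_le_nhds
  have hwit : ∀ g : ↥S, ∃ f : X → ℂ,
      DifferentiableOn ℂ f B ∧ f 0 = 0 ∧ LipschitzOnWith 1 f B ∧
      (g : ↥B → ℂ) = B.restrict f := fun g => g.2
  choose Φ hΦd hΦ0 hΦlip hΦeq using hwit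
  set f : X → ℂ := fun x => if hx : x ∈ B then h ⟨x, hx⟩ else 0 with hfdef
  have hfeq : ∀ (x : X) (hx : x ∈ B), f x = h ⟨x, hx⟩ := fun x hx => dif_pos hx
  have hpt : ∀ (x : X) (hx : x ∈ B), Tendsto (fun g : ↥S => Φ g x) F (𝓝 (f x)) := by
    intro x hx
    have h1 : Tendsto (fun g : ↥S => (g : ↥B → ℂ) ⟨x, hx⟩) F (𝓝 (h ⟨x, hx⟩)) :=
      ((continuous_apply (⟨x, hx⟩ : ↥B)).tendsto h).comp hval
    rw [hfeq x hx]
    refine h1.congr fun g => ?_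
    rw [hΦeq g]; rfl
  have hf0 : f 0 = 0 := by
    have h2 : Tendsto (fun g : ↥S => Φ g 0) F (𝓝 0) := by
      have : (fun g : ↥S => Φ g 0) = fun _ => (0 : ℂ) := funext fun g => hΦ0 g
      rw [this]; exact tendsto_const_nhds
    exact tendsto_nhds_unique (hpt 0 h0B) h2
  have hflip : LipschitzOnWith 1 f B := by
    rw [lipschitzOnWith_iff_dist_le_mul]
    intro x hx y hy
    have hT : Tendsto (fun g : ↥S => dist (Φ g x) (Φ g y)) F (𝓝 (dist (f x) (f y))) :=
      (hpt x hx).dist (hpt y hy)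
    exact le_of_tendsto hT (Eventually.of_forall fun g => (hΦlip g).dist_le_mul x hx y hy)
  have hfdiff : DifferentiableOn ℂ f B := by
    intro x0 hx0
    have hx0' : ‖x0‖ < 1 := mem_ball_zero_iff.mp hx0
    set r : ℝ := (1 - ‖x0‖) / 2 with hrdef
    have hrpos : 0 < r := by rw [hrdef]; linarith
    have hmaps : ∀ v : X, v ≠ 0 → ∀ l ∈ ball (0 : ℂ) (r / ‖v‖), x0 + l • v ∈ B := by
      intro v hv l hl
      have hvpos : 0 < ‖v‖ := norm_pos_iff.mpr hv
      have hl' : ‖l‖ < r / ‖v‖ := mem_ball_zero_iff.mp hl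
      have : ‖x0 + l • v‖ ≤ ‖x0‖ + ‖l‖ * ‖v‖ := by
        refine le_trans (norm_add_le _ _) ?_
        rw [norm_smul]
      have h2 : ‖l‖ * ‖v‖ < r := by
        rw [← lt_div_iff₀ hvpos]; exact hl'
      rw [hBdef, mem_ball_zero_iff]
      have : ‖x0 + l • v‖ < ‖x0‖ + r := by linarith
      rw [hrdef] at this
      linarith
    have hslice_diff : ∀ (g : ↥S) (v : X), v ≠ 0 →
        DifferentiableOn ℂ (fun l : ℂ => Φ g (x0 + l • v)) (ball 0 (r / ‖v‖)) := by
      intro g v hv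
      have he : Differentiable ℂ (fun l : ℂ => x0 + l • v) :=
        (differentiable_id.smul (differentiable_const v)).const_add x0
      exact (hΦd g).comp he.differentiableOn fun l hl => hmaps v hv l hl
    have hslice_lip : ∀ (g : ↥S) (v : X), v ≠ 0 →
        LipschitzOnWith ‖v‖₊ (fun l : ℂ => Φ g (x0 + l • v)) (ball 0 (r / ‖v‖)) := by
      intro g v hv
      have he : LipschitzWith ‖v‖₊ (fun l : ℂ => x0 + l • v) := by
        refine LipschitzWith.of_dist_le_mul fun l m => ?_
        have : (x0 + l • v) - (x0 + m • v) = (l - m) • v := by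
          rw [sub_smul]; abel
        rw [dist_eq_norm, this, norm_smul, dist_eq_norm]
        simp [mul_comm]
      have := (hΦlip g).comp he.lipschitzOnWith fun l hl => hmaps v hv l hl
      rw [one_mul] at this
      exact this
    have hΦat : ∀ g : ↥S, HasFDerivAt (Φ g) (fderiv ℂ (Φ g) x0) x0 := fun g =>
      ((hΦd g).differentiableAt (hBopen.mem_nhds hx0)).hasFDerivAt
    have hderiv_eq : ∀ (g : ↥S) (v : X),
        deriv (fun l : ℂ => Φ g (x0 + l • v)) 0 = fderiv ℂ (Φ g) x0 v := by
      intro g v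
      have he : HasDerivAt (fun l : ℂ => x0 + l • v) v 0 := by
        have := ((hasDerivAt_id (0 : ℂ)).smul_const v).const_add x0
        simpa using this
      have hΦ' : HasFDerivAt (Φ g) (fderiv ℂ (Φ g) x0) (x0 + (0 : ℂ) • v) := by
        simpa using hΦat g
      exact (hΦ'.comp_hasDerivAt 0 he).deriv
    have hTLU : ∀ v : X, v ≠ 0 →
        TendstoLocallyUniformlyOn (fun g : ↥S => fun l : ℂ => Φ g (x0 + l • v))
          (fun l : ℂ => f (x0 + l • v)) F (ball 0 (r / ‖v‖)) := by
      intro v hv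
      rw [tendstoLocallyUniformlyOn_iff_forall_isCompact isOpen_ball]
      intro K hKsub hKc
      set e : ℂ → X := fun l => x0 + l • v with hedef
      have hco : Continuous e := continuous_const.add (continuous_id.smul continuous_const)
      have hK' : IsCompact (e '' K) := hKc.image hco
      have hK's : e '' K ⊆ B := by
        rintro y ⟨l, hl, rfl⟩
        exact hmaps v hv l (hKsub hl)
      have huc : TendstoUniformlyOn Φ f F (e '' K) :=
        tendstoUniformlyOn_of_lip hK' hK's hΦlip hflip fun x hx => hpt x hx
      exact (huc.comp e).mono (subset_preimage_image e K)
    set D0 : X → ℂ := fun v => deriv (fun l : ℂ => f (x0 + l • v)) 0 with hD0def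
    have key : ∀ v : X, Tendsto (fun g : ↥S => fderiv ℂ (Φ g) x0 v) F (𝓝 (D0 v)) := by
      intro v
      rcases eq_or_ne v 0 with rfl | hv
      · have h1 : D0 0 = 0 := by
          rw [hD0def]; simp
        have h2 : (fun g : ↥S => fderiv ℂ (Φ g) x0 (0 : X)) = fun _ => (0 : ℂ) :=
          funext fun g => (fderiv ℂ (Φ g) x0).map_zero
        rw [h1, h2]; exact tendsto_const_nhds
      · have hrv : 0 < r / ‖v‖ := div_pos hrpos (norm_pos_iff.mpr hv)
        have hT := ((hTLU v hv).deriv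
          (Eventually.of_forall fun g => hslice_diff g v hv) isOpen_ball).tendsto_at
          (mem_ball_self hrv)
        exact hT.congr fun g => hderiv_eq g v
    have hnorm : ∀ g : ↥S, ‖fderiv ℂ (Φ g) x0‖ ≤ 1 := fun g => by
      simpa using (hΦat g).le_of_lipschitzOn (hBopen.mem_nhds hx0) (hΦlip g)
    have hD0bound : ∀ v : X, ‖D0 v‖ ≤ ‖v‖ := by
      intro v
      refine le_of_tendsto (key v).norm (Eventually.of_forall fun g => ?_)
      calc ‖fderiv ℂ (Φ g) x0 v‖ ≤ ‖fderiv ℂ (Φ g) x0‖ * ‖v‖ :=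
            ContinuousLinearMap.le_opNorm _ _
        _ ≤ ‖v‖ := by nlinarith [hnorm g, norm_nonneg v, norm_nonneg (fderiv ℂ (Φ g) x0)]
    have hadd : ∀ v w : X, D0 (v + w) = D0 v + D0 w := by
      intro v w
      refine tendsto_nhds_unique (key (v + w)) ?_
      have := (key v).add (key w)
      refine Tendsto.congr (fun g => ?_) this
      exact ((fderiv ℂ (Φ g) x0).map_add v w).symm
    have hsmul : ∀ (c : ℂ) (v : X), D0 (c • v) = c • D0 v := by
      intro c v
      refine tendsto_nhds_unique (key (c • v)) ?_
      have := (key v).const_smul c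
      refine Tendsto.congr (fun g => ?_) this
      exact ((fderiv ℂ (Φ g) x0).map_smul c v).symm
    set D : X →L[ℂ] ℂ := LinearMap.mkContinuous
      ⟨⟨D0, hadd⟩, hsmul⟩ 1 (fun v => by simpa using hD0bound v) with hDdef
    have hrem : ∀ v : X, ‖v‖ < r → ‖f (x0 + v) - f x0 - D0 v‖ ≤ 3 / r * (‖v‖ * ‖v‖) := by
      intro v hvr
      rcases eq_or_ne v 0 with rfl | hv
      · have hz : D0 0 = 0 := norm_le_zero_iff.mp (by simpa using hD0bound 0)
        simp [hz]
      · have hvpos : 0 < ‖v‖ := norm_pos_iff.mpr hv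
        have hR1 : (1 : ℝ) < r / ‖v‖ := (one_lt_div hvpos).mpr hvr
        have hper : ∀ g : ↥S,
            ‖Φ g (x0 + v) - Φ g x0 - fderiv ℂ (Φ g) x0 v‖ ≤ 3 * ‖v‖ / (r / ‖v‖) := by
          intro g
          have h1 := oneDim_remainder hR1 (nnnorm_pos.mpr hv)
            (hslice_diff g v hv) (hslice_lip g v hv)
          simpa only [one_smul, zero_smul, add_zero, hderiv_eq g v, coe_nnnorm] using h1
        have hx0v : x0 + v ∈ B := by
          have := hmaps v hv 1 (mem_ball_zero_iff.mpr (by simpa using hR1))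
          simpa using this
        have hT : Tendsto (fun g : ↥S => ‖Φ g (x0 + v) - Φ g x0 - fderiv ℂ (Φ g) x0 v‖)
            F (𝓝 ‖f (x0 + v) - f x0 - D0 v‖) :=
          (((hpt _ hx0v).sub (hpt x0 hx0)).sub (key v)).norm
        have h2 := le_of_tendsto hT (Eventually.of_forall hper)
        calc ‖f (x0 + v) - f x0 - D0 v‖ ≤ 3 * ‖v‖ / (r / ‖v‖) := h2
          _ = 3 / r * (‖v‖ * ‖v‖) := by field_simp
    have hDf : HasFDerivAt f D x0 := by
      rw [hasFDerivAt_iff_isLittleO_nhds_zero, Asymptotics.isLittleO_iff]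
      intro c hc
      have hmin : 0 < min r (c * r / 3) := lt_min hrpos (by positivity)
      filter_upwards [Metric.ball_mem_nhds (0 : X) hmin] with v hv
      have hv' : ‖v‖ < min r (c * r / 3) := mem_ball_zero_iff.mp hv
      have h1 : ‖v‖ < r := lt_of_lt_of_le hv' (min_le_left _ _)
      have h2 : ‖v‖ ≤ c * r / 3 := (lt_of_lt_of_le hv' (min_le_right _ _)).le
      have h3 := hrem v h1
      have hDv : D v = D0 v := rfl
      calc ‖f (x0 + v) - f x0 - D v‖ ≤ 3 / r * (‖v‖ * ‖v‖) := by rw [hDv]; exact h3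
        _ ≤ c * ‖v‖ := by
            rw [div_mul_eq_mul_div, div_le_iff₀ hrpos]
            nlinarith [mul_le_mul_of_nonneg_left h2 (norm_nonneg v)]
    exact hDf.differentiableAt.differentiableWithinAt


  exact ⟨f, hfdiff, hf0, hflip, funext fun x => (hfeq x.1 x.2).symm⟩
end
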